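/- arXiv:1809.05428 — 6 statements merged into one kernel-verified Lean document; each statement's English description precedes it below -/
import Mathlib

section
/- If x = (x_0, …, x_n) ∈ ℂ^{n+1} is a solution of the generalized Fermat system of type (k,n) and there exist indices 0 ≤ i < j ≤ n with x_i = 0 and x_j = 0, then x = 0. (Equivalently, the generalized Fermat curve C^k(λ) is disjoint from every coordinate subspace {x_i = x_j = 0} of ℙ^n(ℂ).) -/
noncomputable section

/-- A solution of the generalized Fermat system of type `(k,n)`:
`x₀^k + x₁^k + x₂^k = 0` and `λ_j·x₀^k + x₁^k + x_{j+2}^k = 0` for `j = 1, …, n-2`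
(here `lam` is 0-indexed, so `lam j` is `λ_{j+1}` and the last variable index is `j+3`). -/
def gfSol (k n : ℕ) (hn : 3 ≤ n) (lam : Fin (n - 2) → ℂ) (x : Fin (n + 1) → ℂ) : Prop :=
  x ⟨0, by omega⟩ ^ k + x ⟨1, by omega⟩ ^ k + x ⟨2, by omega⟩ ^ k = 0 ∧
    ∀ j : Fin (n - 2),
      lam j * x ⟨0, by omega⟩ ^ k + x ⟨1, by omega⟩ ^ k +
        x ⟨(j : ℕ) + 3, by have := j.2; omega⟩ ^ k = 0

/-! On a solution, each `x_m^k` is a linear form `gfForm lam m` in `(x₀^k, x₁^k)`: the forms are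
`(1, 0)`, `(0, 1)`, `(-1, -1)` and `(-λ_j, -1)`, and since the `λ_j` are distinct and avoid `0` and `1`,
any two of them are linearly independent. Hence two vanishing coordinates force `x₀^k = x₁^k = 0`,
and then every `x_m^k`, so every `x_m`, vanishes. -/

theorem eq_zero_of_cross_ne_zero {R : Type*} [CommRing R] [NoZeroDivisors R] {u v : R × R}
    {a b : R} (huv : u.1 * v.2 - v.1 * u.2 ≠ 0) (hu : u.1 * a + u.2 * b = 0)
    (hv : v.1 * a + v.2 * b = 0) : a = 0 ∧ b = 0 := by
  have ha : (u.1 * v.2 - v.1 * u.2) * a = 0 := by linear_combination v.2 * hu - u.2 * hv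
  have hb : (u.1 * v.2 - v.1 * u.2) * b = 0 := by linear_combination u.1 * hv - v.1 * hu
  exact ⟨(mul_eq_zero.mp ha).resolve_left huv, (mul_eq_zero.mp hb).resolve_left huv⟩

def gfForm {n : ℕ} (lam : Fin (n - 2) → ℂ) : Fin (n + 1) → ℂ × ℂ
  | ⟨0, _⟩ => (1, 0)
  | ⟨1, _⟩ => (0, 1)
  | ⟨2, _⟩ => (-1, -1)
  | ⟨m + 3, hm⟩ => (-lam ⟨m, by omega⟩, -1)

theorem gfSol.pow_eq_gfForm {k n : ℕ} {hn : 3 ≤ n} {lam : Fin (n - 2) → ℂ} {x : Fin (n + 1) → ℂ}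
    (hx : gfSol k n hn lam x) (m : Fin (n + 1)) :
    x m ^ k = (gfForm lam m).1 * x ⟨0, by omega⟩ ^ k + (gfForm lam m).2 * x ⟨1, by omega⟩ ^ k := by
  obtain ⟨h2, h3⟩ := hx
  match m with
  | ⟨0, _⟩ => simp [gfForm]
  | ⟨1, _⟩ => simp [gfForm]
  | ⟨2, _⟩ => simp only [gfForm]; linear_combination h2
  | ⟨m + 3, hm⟩ => simp only [gfForm]; linear_combination h3 ⟨m, by omega⟩

theorem gfForm_cross_ne_zero {n : ℕ} {lam : Fin (n - 2) → ℂ} (hl0 : ∀ j, lam j ≠ 0)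
    (hl1 : ∀ j, lam j ≠ 1) (hinj : Function.Injective lam) {i j : Fin (n + 1)} (hij : i < j) :
    (gfForm lam i).1 * (gfForm lam j).2 - (gfForm lam j).1 * (gfForm lam i).2 ≠ 0 := by
  rw [Fin.lt_def] at hij
  rcases i with ⟨_ | _ | _ | i, hi⟩ <;> rcases j with ⟨_ | _ | _ | j, hj⟩ <;>
    simp only [gfForm] at hij ⊢ <;> try omega
  case zero.succ.zero | zero.succ.succ.zero | zero.succ.succ.succ | succ.zero.succ.succ.zero =>
    norm_num
  case succ.zero.succ.succ.succ =>
    exact fun h => hl0 _ (by linear_combination h)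
  case succ.succ.zero.succ.succ.succ =>
    exact fun h => hl1 _ (by linear_combination -h)
  case succ.succ.succ.succ.succ.succ =>
    exact fun h => hinj.ne (a₁ := ⟨i, by omega⟩) (a₂ := ⟨j, by omega⟩) (by rw [ne_eq, Fin.mk.injEq]; omega)
      (by linear_combination h)

theorem generalized_fermat_disjoint_from_coordinate_subspaces (k n : ℕ) (hk : 2 ≤ k) (hn : 3 ≤ n)
    (lam : Fin (n - 2) → ℂ) (hl0 : ∀ j, lam j ≠ 0) (hl1 : ∀ j, lam j ≠ 1)
    (hinj : Function.Injective lam)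
    (x : Fin (n + 1) → ℂ) (hx : gfSol k n hn lam x)
    (i j : Fin (n + 1)) (hij : i < j) (hxi : x i = 0) (hxj : x j = 0) :
    x = 0 := by
  have hk0 : k ≠ 0 := by omega
  obtain ⟨h0, h1⟩ := eq_zero_of_cross_ne_zero (gfForm_cross_ne_zero hl0 hl1 hinj hij)
    (by rw [← hx.pow_eq_gfForm i, hxi, zero_pow hk0])
    (by rw [← hx.pow_eq_gfForm j, hxj, zero_pow hk0])
  funext m
  refine pow_eq_zero_iff hk0 |>.mp ?_
  rw [hx.pow_eq_gfForm m, h0, h1, mul_zero, mul_zero, add_zero]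
end
end

section
/- Let j ∈ {0, 1, …, n} and let x be a nonzero solution of the generalized Fermat system of type (k,n). Then there exists c ∈ ℂ such that multiplying the j-th coordinate of x by ω (and leaving the other coordinates unchanged) yields c·x, if and only if x_j = 0. (That is, the fixed points of the automorphism φ_j of the curve C^k(λ) are exactly the curve points lying on the hyperplane {x_j = 0}.) -/
noncomputable section

theorem generalized_fermat_fixed_points_of_phi (k n : ℕ) (hk : 2 ≤ k) (hn : 3 ≤ n)
    (lam : Fin (n - 2) → ℂ) (hl0 : ∀ j, lam j ≠ 0) (hl1 : ∀ j, lam j ≠ 1)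
    (hinj : Function.Injective lam)
    (x : Fin (n + 1) → ℂ) (hx0 : x ≠ 0) (hx : gfSol k n hn lam x) (j : Fin (n + 1)) :
    (∃ c : ℂ,
        Function.update x j
          (Complex.exp (2 * (Real.pi : ℂ) * Complex.I / (k : ℂ)) * x j) = c • x) ↔
      x j = 0 := by
  have hkne : k ≠ 0 := by omega
  have hω : Complex.exp (2 * (Real.pi : ℂ) * Complex.I / (k : ℂ)) ≠ 1 := by
    intro hh
    rw [Complex.exp_eq_one_iff] at hh
    obtain ⟨m, hm⟩ := hh
    have hk0 : (k : ℂ) ≠ 0 := Nat.cast_ne_zero.2 hkne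
    have h2 : (2 * (Real.pi : ℂ) * Complex.I) ≠ 0 := by
      simp [Real.pi_ne_zero, Complex.I_ne_zero]
    rw [div_eq_iff hk0] at hm
    have h3 : (1 : ℂ) = (m : ℂ) * (k : ℂ) :=
      mul_left_cancel₀ h2 (by linear_combination hm)
    have h4 : (1 : ℤ) = m * (k : ℤ) := by exact_mod_cast h3
    have : (k : ℤ) ∣ 1 := Dvd.intro m (by linarith)
    have := Int.le_of_dvd one_pos this
    omega
  constructor
  · rintro ⟨c, hc⟩
    by_contra hxj
    have hcj : Complex.exp (2 * (Real.pi : ℂ) * Complex.I / (k : ℂ)) * x j = c * x j := by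
      have := congrFun hc j
      simpa [Function.update_self] using this
    have hcω : c = Complex.exp (2 * (Real.pi : ℂ) * Complex.I / (k : ℂ)) :=
      (mul_right_cancel₀ hxj hcj).symm
    have hz : ∀ i : Fin (n + 1), (i : ℕ) ≠ (j : ℕ) → x i = 0 := by
      intro i hi
      have hij : i ≠ j := fun h => hi (by rw [h])
      have hxi : x i = c * x i := by
        have := congrFun hc i
        simpa [Function.update_of_ne hij] using this
      by_contra h
      have h1c : (1 : ℂ) = c := by
        have : (1 : ℂ) * x i = c * x i := by rw [one_mul]; exact hxi
        exact mul_right_cancel₀ h this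
      exact hω (by rw [← hcω, ← h1c])
    obtain ⟨h1, h2⟩ := hx
    have hpow : x j ^ k = 0 := by
      rcases lt_or_ge (j : ℕ) 3 with hj | hj
      · -- j ∈ {0,1,2}
        have : (j : ℕ) = 0 ∨ (j : ℕ) = 1 ∨ (j : ℕ) = 2 := by omega
        rcases this with hj0 | hj1 | hj2
        · have e1 : x ⟨1, by omega⟩ = 0 := hz _ (by simp [hj0])
          have e2 : x ⟨2, by omega⟩ = 0 := hz _ (by simp [hj0])
          have ej : x ⟨0, by omega⟩ = x j := by
            congr 1; exact (Fin.ext hj0.symm)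
          rw [e1, e2, ej] at h1
          simp only [zero_pow hkne, zero_add, add_zero] at h1
          exact h1
        · have e1 : x ⟨0, by omega⟩ = 0 := hz _ (by simp [hj1])
          have e2 : x ⟨2, by omega⟩ = 0 := hz _ (by simp [hj1])
          have ej : x ⟨1, by omega⟩ = x j := by
            congr 1; exact (Fin.ext hj1.symm)
          rw [e1, e2, ej] at h1
          simp only [zero_pow hkne, zero_add, add_zero] at h1
          exact h1
        · have e1 : x ⟨0, by omega⟩ = 0 := hz _ (by simp [hj2])
          have e2 : x ⟨1, by omega⟩ = 0 := hz _ (by simp [hj2])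
          have ej : x ⟨2, by omega⟩ = x j := by
            congr 1; exact (Fin.ext hj2.symm)
          rw [e1, e2, ej] at h1
          simp only [zero_pow hkne, zero_add, add_zero] at h1
          exact h1
      · -- j ≥ 3
        have hjn : (j : ℕ) ≤ n := by omega
        set m : Fin (n - 2) := ⟨(j : ℕ) - 3, by have := j.2; omega⟩ with hm
        have heq := h2 m
        have e0 : x ⟨0, by omega⟩ = 0 := hz _ (by simp; omega)
        have e1 : x ⟨1, by omega⟩ = 0 := hz _ (by simp; omega)
        have ej : x ⟨(m : ℕ) + 3, by have := m.2; omega⟩ = x j := by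
          congr 1
          exact Fin.ext (by simp [hm]; omega)
        rw [e0, e1, ej] at heq
        simp only [zero_pow hkne, mul_zero, zero_add, add_zero] at heq
        exact heq
    exact hxj (pow_eq_zero_iff hkne |>.1 hpow)
  · intro h
    refine ⟨1, ?_⟩
    funext i
    rcases eq_or_ne i j with rfl | hi
    · simp [Function.update_self, h]
    · simp [Function.update_of_ne hi]
end
end

section
/- For each j ∈ {0, 1, …, n}, the set of points of the generalized Fermat curve C^k(λ) ⊂ ℙ^n(ℂ) whose j-th homogeneous coordinate vanishes (i.e., the set of points represented by nonzero solutions x with x_j = 0) is a finite set with exactly k^{n-1} elements. -/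
noncomputable section

namespace GFaux

open Polynomial

/-- `L i = λ_{i-3}` for `i ≥ 3`, junk otherwise. -/
def L (n : ℕ) (hn : 3 ≤ n) (lam : Fin (n - 2) → ℂ) (i : Fin (n + 1)) : ℂ :=
  if h : 3 ≤ (i : ℕ) then lam ⟨(i : ℕ) - 3, by have := i.2; omega⟩ else 0

theorem L_eq (n : ℕ) (hn : 3 ≤ n) (lam : Fin (n - 2) → ℂ) (i : Fin (n + 1)) (h : 3 ≤ (i : ℕ)) :
    L n hn lam i = lam ⟨(i : ℕ) - 3, by have := i.2; omega⟩ := dif_pos h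

/-- The reference index: `1` if `j = 0`, else `0`. -/
def M (n : ℕ) (hn : 3 ≤ n) (j : Fin (n + 1)) : Fin (n + 1) :=
  if (j : ℕ) = 0 then (⟨1, by omega⟩ : Fin (n + 1)) else (⟨0, by omega⟩ : Fin (n + 1))

/-- The forced value of `x₀ ^ k` on the part of the curve with `x_j = 0`,
normalized so that the reference coordinate has `k`-th power `1`. -/
def A (n : ℕ) (j : Fin (n + 1)) : ℂ := if (j : ℕ) = 0 then 0 else 1

/-- The forced value of `x₁ ^ k`. -/
def B (n : ℕ) (hn : 3 ≤ n) (lam : Fin (n - 2) → ℂ) (j : Fin (n + 1)) : ℂ :=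
  if (j : ℕ) = 0 then 1 else if (j : ℕ) = 1 then 0
  else if (j : ℕ) = 2 then -1 else -(L n hn lam j)

/-- The forced value of `x_i ^ k`. -/
def Y (n : ℕ) (hn : 3 ≤ n) (lam : Fin (n - 2) → ℂ) (j : Fin (n + 1)) (i : Fin (n + 1)) : ℂ :=
  if (i : ℕ) = 0 then A n j
  else if (i : ℕ) = 1 then B n hn lam j
  else if (i : ℕ) = 2 then -(A n j + B n hn lam j)
  else -(L n hn lam i * A n j + B n hn lam j)

theorem Y_0 (n : ℕ) (hn : 3 ≤ n) (lam : Fin (n - 2) → ℂ) (j i : Fin (n + 1))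
    (h : (i : ℕ) = 0) : Y n hn lam j i = A n j := by
  unfold Y; rw [if_pos h]

theorem Y_1 (n : ℕ) (hn : 3 ≤ n) (lam : Fin (n - 2) → ℂ) (j i : Fin (n + 1))
    (h : (i : ℕ) = 1) : Y n hn lam j i = B n hn lam j := by
  unfold Y; rw [if_neg (by omega), if_pos h]

theorem Y_2 (n : ℕ) (hn : 3 ≤ n) (lam : Fin (n - 2) → ℂ) (j i : Fin (n + 1))
    (h : (i : ℕ) = 2) : Y n hn lam j i = -(A n j + B n hn lam j) := by
  unfold Y; rw [if_neg (by omega), if_neg (by omega), if_pos h]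

theorem Y_ge3 (n : ℕ) (hn : 3 ≤ n) (lam : Fin (n - 2) → ℂ) (j i : Fin (n + 1))
    (h : 3 ≤ (i : ℕ)) :
    Y n hn lam j i = -(L n hn lam i * A n j + B n hn lam j) := by
  unfold Y; rw [if_neg (by omega), if_neg (by omega), if_neg (by omega)]

theorem M_ne (n : ℕ) (hn : 3 ≤ n) (j : Fin (n + 1)) : M n hn j ≠ j := by
  unfold M
  split_ifs with h
  · exact Fin.ne_of_val_ne (by simpa [h] using one_ne_zero)
  · exact Fin.ne_of_val_ne (by simpa using fun h' => h h'.symm)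

theorem Y_M (n : ℕ) (hn : 3 ≤ n) (lam : Fin (n - 2) → ℂ) (j : Fin (n + 1)) :
    Y n hn lam j (M n hn j) = 1 := by
  unfold Y M A B
  split_ifs with h <;> simp_all

theorem Y_j (n : ℕ) (hn : 3 ≤ n) (lam : Fin (n - 2) → ℂ) (j : Fin (n + 1)) :
    Y n hn lam j j = 0 := by
  unfold Y A B
  by_cases h0 : (j : ℕ) = 0
  · simp [h0]
  by_cases h1 : (j : ℕ) = 1
  · simp [h0, h1]
  by_cases h2 : (j : ℕ) = 2
  · simp [h0, h1, h2]
  · simp [h0, h1, h2]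

theorem Y_ne (n : ℕ) (hn : 3 ≤ n) (lam : Fin (n - 2) → ℂ) (j : Fin (n + 1))
    (hl0 : ∀ i, lam i ≠ 0) (hl1 : ∀ i, lam i ≠ 1)
    (hinj : Function.Injective lam) (i : Fin (n + 1)) (hij : i ≠ j) :
    Y n hn lam j i ≠ 0 := by
  have hij' : (i : ℕ) ≠ (j : ℕ) := fun h => hij (Fin.ext h)
  have hLj0 : 3 ≤ (j : ℕ) → L n hn lam j ≠ 0 := fun h3 => by
    rw [L_eq n hn lam j h3]; exact hl0 _
  have hLj1 : 3 ≤ (j : ℕ) → L n hn lam j ≠ 1 := fun h3 => by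
    rw [L_eq n hn lam j h3]; exact hl1 _
  have hLi0 : 3 ≤ (i : ℕ) → L n hn lam i ≠ 0 := fun h3 => by
    rw [L_eq n hn lam i h3]; exact hl0 _
  have hLi1 : 3 ≤ (i : ℕ) → L n hn lam i ≠ 1 := fun h3 => by
    rw [L_eq n hn lam i h3]; exact hl1 _
  have hLij : 3 ≤ (i : ℕ) → 3 ≤ (j : ℕ) → L n hn lam i ≠ L n hn lam j := by
    intro h3i h3j h
    rw [L_eq n hn lam i h3i, L_eq n hn lam j h3j] at h
    have := congrArg Fin.val (hinj h)
    simp only at this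
    omega
  by_cases hi0 : (i : ℕ) = 0
  · rw [Y_0 n hn lam j i hi0]
    unfold A
    rw [if_neg (by omega)]
    exact one_ne_zero
  by_cases hi1 : (i : ℕ) = 1
  · rw [Y_1 n hn lam j i hi1]
    unfold B
    by_cases hj0 : (j : ℕ) = 0
    · rw [if_pos hj0]; exact one_ne_zero
    rw [if_neg hj0, if_neg (by omega)]
    by_cases hj2 : (j : ℕ) = 2
    · rw [if_pos hj2]; norm_num
    · rw [if_neg hj2]
      exact neg_ne_zero.mpr (hLj0 (by omega))
  by_cases hi2 : (i : ℕ) = 2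
  · rw [Y_2 n hn lam j i hi2]
    unfold A B
    by_cases hj0 : (j : ℕ) = 0
    · rw [if_pos hj0, if_pos hj0]; norm_num
    by_cases hj1 : (j : ℕ) = 1
    · rw [if_neg hj0, if_neg hj0, if_pos hj1]; norm_num
    rw [if_neg hj0, if_neg hj0, if_neg hj1, if_neg (by omega)]
    intro h
    exact hLj1 (by omega) (by linear_combination h)
  · have h3i : 3 ≤ (i : ℕ) := by omega
    rw [Y_ge3 n hn lam j i h3i]
    unfold A B
    by_cases hj0 : (j : ℕ) = 0
    · rw [if_pos hj0, if_pos hj0]; norm_num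
    by_cases hj1 : (j : ℕ) = 1
    · rw [if_neg hj0, if_neg hj0, if_pos hj1]
      intro h
      exact hLi0 h3i (by linear_combination -h)
    by_cases hj2 : (j : ℕ) = 2
    · rw [if_neg hj0, if_neg hj0, if_neg hj1, if_pos hj2]
      intro h
      exact hLi1 h3i (by linear_combination -h)
    · rw [if_neg hj0, if_neg hj0, if_neg hj1, if_neg hj2]
      intro h
      exact hLij h3i (by omega) (by linear_combination -h)

theorem gfSol_apply (k n : ℕ) (hn : 3 ≤ n) (lam : Fin (n - 2) → ℂ) (x : Fin (n + 1) → ℂ)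
    (hsol : gfSol k n hn lam x) (i : Fin (n + 1)) (hi : 3 ≤ (i : ℕ)) :
    lam ⟨(i : ℕ) - 3, by have := i.2; omega⟩ * x ⟨0, by omega⟩ ^ k + x ⟨1, by omega⟩ ^ k
      + x i ^ k = 0 := by
  have h := hsol.2 ⟨(i : ℕ) - 3, by have := i.2; omega⟩
  have e : (⟨((⟨(i : ℕ) - 3, by have := i.2; omega⟩ : Fin (n - 2)) : ℕ) + 3,
      by have := i.2; omega⟩ : Fin (n + 1)) = i := by
    apply Fin.ext
    simp only [Fin.val_mk]
    omega
  rw [e] at h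
  exact h

theorem gfSol_smul (k n : ℕ) (hn : 3 ≤ n) (lam : Fin (n - 2) → ℂ) (c : ℂ)
    (x : Fin (n + 1) → ℂ) (hsol : gfSol k n hn lam x) :
    gfSol k n hn lam (fun i => c * x i) := by
  obtain ⟨h1, h2⟩ := hsol
  constructor
  · simp only [mul_pow]
    linear_combination (c : ℂ) ^ k * h1
  · intro j'
    simp only [mul_pow]
    linear_combination (c : ℂ) ^ k * h2 j'

theorem gfSol_of_Y (k n : ℕ) (hn : 3 ≤ n) (lam : Fin (n - 2) → ℂ) (j : Fin (n + 1))
    (x : Fin (n + 1) → ℂ) (hY : ∀ i, x i ^ k = Y n hn lam j i) :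
    gfSol k n hn lam x := by
  have e0 := hY ⟨0, by omega⟩
  have e1 := hY ⟨1, by omega⟩
  rw [Y_0 n hn lam j _ rfl] at e0
  rw [Y_1 n hn lam j _ rfl] at e1
  constructor
  · have e2 := hY ⟨2, by omega⟩
    rw [Y_2 n hn lam j _ rfl] at e2
    linear_combination e0 + e1 + e2
  · intro j'
    have ei := hY ⟨(j' : ℕ) + 3, by have := j'.2; omega⟩
    rw [Y_ge3 n hn lam j _ (by simp)] at ei
    rw [L_eq n hn lam _ (by simp)] at ei
    have e : (⟨((⟨(j' : ℕ) + 3, by have := j'.2; omega⟩ : Fin (n + 1)) : ℕ) - 3,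
        by have := j'.2; omega⟩ : Fin (n - 2)) = j' := by
      apply Fin.ext
      simp only [Fin.val_mk]
      omega
    rw [e] at ei
    linear_combination lam j' * e0 + e1 + ei

theorem forced (k n : ℕ) (hk : 1 ≤ k) (hn : 3 ≤ n) (lam : Fin (n - 2) → ℂ)
    (j : Fin (n + 1)) (x : Fin (n + 1) → ℂ) (hsol : gfSol k n hn lam x)
    (hj : x j = 0) (hm : x (M n hn j) = 1) (i : Fin (n + 1)) :
    x i ^ k = Y n hn lam j i := by
  have hk0 : k ≠ 0 := by omega
  have h1 := hsol.1
  have hab : x ⟨0, by omega⟩ ^ k = A n j ∧ x ⟨1, by omega⟩ ^ k = B n hn lam j := by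
    by_cases hj0 : (j : ℕ) = 0
    · have hj' : j = (⟨0, by omega⟩ : Fin (n + 1)) := Fin.ext hj0
      have hm' : x ⟨1, by omega⟩ = 1 := by unfold M at hm; rwa [if_pos hj0] at hm
      constructor
      · rw [← hj', hj, zero_pow hk0]
        unfold A; rw [if_pos hj0]
      · rw [hm', one_pow]
        unfold B; rw [if_pos hj0]
    have hm' : x ⟨0, by omega⟩ = 1 := by unfold M at hm; rwa [if_neg hj0] at hm
    have h0 : x ⟨0, by omega⟩ ^ k = A n j := by
      rw [hm', one_pow]; unfold A; rw [if_neg hj0]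
    refine ⟨h0, ?_⟩
    have h0' : x ⟨0, by omega⟩ ^ k = 1 := by rw [hm', one_pow]
    by_cases hj1 : (j : ℕ) = 1
    · have hj' : j = (⟨1, by omega⟩ : Fin (n + 1)) := Fin.ext hj1
      rw [← hj', hj, zero_pow hk0]
      unfold B; rw [if_neg hj0, if_pos hj1]
    by_cases hj2 : (j : ℕ) = 2
    · have hj' : j = (⟨2, by omega⟩ : Fin (n + 1)) := Fin.ext hj2
      have h2' : x ⟨2, by omega⟩ ^ k = 0 := by rw [← hj', hj, zero_pow hk0]
      have hB : B n hn lam j = -1 := by unfold B; rw [if_neg hj0, if_neg hj1, if_pos hj2]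
      rw [hB]
      linear_combination h1 - h0' - h2'
    · have h3 : 3 ≤ (j : ℕ) := by omega
      have h := gfSol_apply k n hn lam x hsol j h3
      have hjk : x j ^ k = 0 := by rw [hj, zero_pow hk0]
      have hB : B n hn lam j = -(lam ⟨(j : ℕ) - 3, by have := j.2; omega⟩) := by
        unfold B; rw [if_neg hj0, if_neg hj1, if_neg hj2, L_eq n hn lam j h3]
      rw [hB]
      linear_combination h - (lam ⟨(j : ℕ) - 3, by have := j.2; omega⟩) * h0' - hjk
  obtain ⟨ha, hb⟩ := hab
  by_cases hi0 : (i : ℕ) = 0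
  · have hi' : i = (⟨0, by omega⟩ : Fin (n + 1)) := Fin.ext hi0
    rw [hi', Y_0 n hn lam j _ rfl]
    exact ha
  by_cases hi1 : (i : ℕ) = 1
  · have hi' : i = (⟨1, by omega⟩ : Fin (n + 1)) := Fin.ext hi1
    rw [hi', Y_1 n hn lam j _ rfl]
    exact hb
  by_cases hi2 : (i : ℕ) = 2
  · have hi' : i = (⟨2, by omega⟩ : Fin (n + 1)) := Fin.ext hi2
    rw [hi', Y_2 n hn lam j _ rfl]
    have h2 : x ⟨2, by omega⟩ = x i := by rw [hi']
    linear_combination h1 - ha - hb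
  · have h3 : 3 ≤ (i : ℕ) := by omega
    have h := gfSol_apply k n hn lam x hsol i h3
    rw [Y_ge3 n hn lam j i h3, L_eq n hn lam i h3]
    linear_combination h - (lam ⟨(i : ℕ) - 3, by have := i.2; omega⟩) * ha - hb

theorem M_ne_zero (k n : ℕ) (hk : 1 ≤ k) (hn : 3 ≤ n) (lam : Fin (n - 2) → ℂ)
    (j : Fin (n + 1)) (x : Fin (n + 1) → ℂ) (hsol : gfSol k n hn lam x)
    (hj : x j = 0) (hx : x ≠ 0) : x (M n hn j) ≠ 0 := by
  intro hm
  apply hx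
  have hk0 : k ≠ 0 := by omega
  have h1 := hsol.1
  have h01 : x ⟨0, by omega⟩ ^ k = 0 ∧ x ⟨1, by omega⟩ ^ k = 0 := by
    by_cases hj0 : (j : ℕ) = 0
    · have hj' : j = (⟨0, by omega⟩ : Fin (n + 1)) := Fin.ext hj0
      have hm' : x ⟨1, by omega⟩ = 0 := by unfold M at hm; rwa [if_pos hj0] at hm
      exact ⟨by rw [← hj', hj, zero_pow hk0], by rw [hm', zero_pow hk0]⟩
    have hm' : x ⟨0, by omega⟩ = 0 := by unfold M at hm; rwa [if_neg hj0] at hm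
    have h0 : x ⟨0, by omega⟩ ^ k = 0 := by rw [hm', zero_pow hk0]
    refine ⟨h0, ?_⟩
    by_cases hj1 : (j : ℕ) = 1
    · have hj' : j = (⟨1, by omega⟩ : Fin (n + 1)) := Fin.ext hj1
      rw [← hj', hj, zero_pow hk0]
    by_cases hj2 : (j : ℕ) = 2
    · have hj' : j = (⟨2, by omega⟩ : Fin (n + 1)) := Fin.ext hj2
      have h2' : x ⟨2, by omega⟩ ^ k = 0 := by rw [← hj', hj, zero_pow hk0]
      linear_combination h1 - h0 - h2'
    · have h3 : 3 ≤ (j : ℕ) := by omega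
      have h := gfSol_apply k n hn lam x hsol j h3
      have hjk : x j ^ k = 0 := by rw [hj, zero_pow hk0]
      linear_combination h - (lam ⟨(j : ℕ) - 3, by have := j.2; omega⟩) * h0 - hjk
  obtain ⟨h0, h1'⟩ := h01
  funext i
  simp only [Pi.zero_apply]
  have hik : x i ^ k = 0 := by
    by_cases hi0 : (i : ℕ) = 0
    · have hi' : i = (⟨0, by omega⟩ : Fin (n + 1)) := Fin.ext hi0
      rw [hi']; exact h0
    by_cases hi1 : (i : ℕ) = 1
    · have hi' : i = (⟨1, by omega⟩ : Fin (n + 1)) := Fin.ext hi1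
      rw [hi']; exact h1'
    by_cases hi2 : (i : ℕ) = 2
    · have hi' : i = (⟨2, by omega⟩ : Fin (n + 1)) := Fin.ext hi2
      rw [hi']
      linear_combination h1 - h0 - h1'
    · have h3 : 3 ≤ (i : ℕ) := by omega
      have h := gfSol_apply k n hn lam x hsol i h3
      linear_combination h - (lam ⟨(i : ℕ) - 3, by have := i.2; omega⟩) * h0 - h1'
  exact (pow_eq_zero_iff hk0).mp hik

end GFaux

theorem generalized_fermat_fixed_point_count_single (k n : ℕ) (hk : 2 ≤ k) (hn : 3 ≤ n)
    (lam : Fin (n - 2) → ℂ) (hl0 : ∀ j, lam j ≠ 0) (hl1 : ∀ j, lam j ≠ 1)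
    (hinj : Function.Injective lam) (j : Fin (n + 1)) :
    {p : Projectivization ℂ (Fin (n + 1) → ℂ) |
        ∃ (x : Fin (n + 1) → ℂ) (hx : x ≠ 0),
          gfSol k n hn lam x ∧ x j = 0 ∧ p = Projectivization.mk ℂ x hx}.Finite ∧
      {p : Projectivization ℂ (Fin (n + 1) → ℂ) |
        ∃ (x : Fin (n + 1) → ℂ) (hx : x ≠ 0),
          gfSol k n hn lam x ∧ x j = 0 ∧ p = Projectivization.mk ℂ x hx}.ncard =
        k ^ (n - 1) := by
  classical
  have hk0 : k ≠ 0 := by omega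
  have hk0' : 0 < k := by omega
  set m := GFaux.M n hn j with hm_def
  have hmj : m ≠ j := GFaux.M_ne n hn j
  set Yf := GFaux.Y n hn lam j with hY_def
  set t : Fin (n + 1) → Finset ℂ :=
    fun i => if i = m then {1} else (Polynomial.nthRoots k (Yf i)).toFinset with ht_def
  set X : Set (Fin (n + 1) → ℂ) := ↑(Fintype.piFinset t) with hX_def
  have hmemX : ∀ x : Fin (n + 1) → ℂ,
      x ∈ X ↔ (x m = 1 ∧ ∀ i, i ≠ m → x i ^ k = Yf i) := by
    intro x
    rw [hX_def]
    constructor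
    · intro hx
      have hx' := Fintype.mem_piFinset.mp hx
      constructor
      · have := hx' m
        rw [ht_def] at this
        simp only [if_pos rfl] at this
        simpa using this
      · intro i hi
        have := hx' i
        rw [ht_def] at this
        simp only [if_neg hi] at this
        exact (Polynomial.mem_nthRoots hk0').mp (Multiset.mem_toFinset.mp this)
    · rintro ⟨h1, h2⟩
      refine Fintype.mem_piFinset.mpr fun i => ?_
      rw [ht_def]
      by_cases hi : i = m
      · simp only [if_pos hi]
        rw [hi]
        simp [h1]
      · simp only [if_neg hi]
        exact Multiset.mem_toFinset.mpr ((Polynomial.mem_nthRoots hk0').mpr (h2 i hi))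
  have hYm : Yf m = 1 := GFaux.Y_M n hn lam j
  have hYj : Yf j = 0 := GFaux.Y_j n hn lam j
  have hXpow : ∀ x ∈ X, ∀ i, x i ^ k = Yf i := by
    intro x hx i
    obtain ⟨h1, h2⟩ := (hmemX x).mp hx
    by_cases hi : i = m
    · rw [hi, h1, hYm, one_pow]
    · exact h2 i hi
  have hXne : ∀ x ∈ X, x ≠ 0 := by
    intro x hx h0
    have := ((hmemX x).mp hx).1
    rw [h0] at this
    simpa using this
  have hXsol : ∀ x ∈ X, gfSol k n hn lam x := fun x hx =>
    GFaux.gfSol_of_Y k n hn lam j x (hXpow x hx)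
  have hXj : ∀ x ∈ X, x j = 0 := by
    intro x hx
    have h := hXpow x hx j
    rw [hYj] at h
    exact (pow_eq_zero_iff hk0).mp h
  have hone : (fun _ : Fin (n + 1) => (1 : ℂ)) ≠ 0 := by
    intro h
    exact one_ne_zero (congrFun h ⟨0, by omega⟩)
  set g : (Fin (n + 1) → ℂ) → Projectivization ℂ (Fin (n + 1) → ℂ) :=
    fun x => if hx : x ≠ 0 then Projectivization.mk ℂ x hx
      else Projectivization.mk ℂ (fun _ => 1) hone with hg_def
  have hgX : ∀ (x : Fin (n + 1) → ℂ) (hx : x ≠ 0), g x = Projectivization.mk ℂ x hx := by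
    intro x hx
    rw [hg_def]
    simp only
    rw [dif_pos hx]
  have hSeq : {p : Projectivization ℂ (Fin (n + 1) → ℂ) |
      ∃ (x : Fin (n + 1) → ℂ) (hx : x ≠ 0),
        gfSol k n hn lam x ∧ x j = 0 ∧ p = Projectivization.mk ℂ x hx} = g '' X := by
    ext p
    simp only [Set.mem_setOf_eq, Set.mem_image]
    constructor
    · rintro ⟨x, hx, hsol, hxj, rfl⟩
      have hxm : x m ≠ 0 := GFaux.M_ne_zero k n (by omega) hn lam j x hsol hxj hx
      set x' : Fin (n + 1) → ℂ := fun i => (x m)⁻¹ * x i with hx'_def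
      have hx'm : x' m = 1 := by rw [hx'_def]; simp [inv_mul_cancel₀ hxm]
      have hx'sol : gfSol k n hn lam x' := by
        rw [hx'_def]; exact GFaux.gfSol_smul k n hn lam _ x hsol
      have hx'j : x' j = 0 := by rw [hx'_def]; simp [hxj]
      have hx'ne : x' ≠ 0 := by
        intro h
        rw [h] at hx'm
        simp at hx'm
      refine ⟨x', ?_, ?_⟩
      · exact (hmemX x').mpr ⟨hx'm, fun i _ =>
          GFaux.forced k n (by omega) hn lam j x' hx'sol hx'j hx'm i⟩
      · rw [hgX x' hx'ne, Projectivization.mk_eq_mk_iff']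
        refine ⟨(x m)⁻¹, funext fun i => ?_⟩
        rw [hx'_def]
        simp [smul_eq_mul]
    · rintro ⟨x, hx, rfl⟩
      have hxne := hXne x hx
      exact ⟨x, hxne, hXsol x hx, hXj x hx, hgX x hxne⟩
  have hinjg : Set.InjOn g X := by
    intro x hx y hy hxy
    have hxne := hXne x hx
    have hyne := hXne y hy
    rw [hgX x hxne, hgX y hyne, Projectivization.mk_eq_mk_iff] at hxy
    obtain ⟨u, hu⟩ := hxy
    have hxm := ((hmemX x).mp hx).1
    have hym := ((hmemX y).mp hy).1
    have hum := congrFun hu m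
    rw [Pi.smul_apply, hym, hxm] at hum
    have hu1 : (u : ℂ) = 1 := by
      rw [Units.smul_def, smul_eq_mul, mul_one] at hum
      exact hum
    funext i
    have hi := congrFun hu i
    rw [Pi.smul_apply, Units.smul_def, smul_eq_mul, hu1, one_mul] at hi
    exact hi.symm
  have hYne : ∀ i, i ≠ j → Yf i ≠ 0 := fun i hi =>
    GFaux.Y_ne n hn lam j hl0 hl1 hinj i hi
  have htm : (t m).card = 1 := by
    rw [ht_def]
    simp
  have htj : (t j).card = 1 := by
    have hrep : (Multiset.replicate k (0 : ℂ)).toFinset = {0} := by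
      ext a
      simp [Multiset.mem_replicate, hk0]
    rw [ht_def]
    simp only [if_neg (show ¬ j = m from fun h => hmj h.symm)]
    rw [hYj, Polynomial.nthRoots_zero_right, hrep]
    simp
  have htk : ∀ i, i ≠ m → i ≠ j → (t i).card = k := by
    intro i him hij
    rw [ht_def]
    simp only [if_neg him]
    have hsep : (Polynomial.X ^ k - Polynomial.C (Yf i)).Separable :=
      Polynomial.separable_X_pow_sub_C _ (Nat.cast_ne_zero.mpr hk0) (hYne i hij)
    have hnd : (Polynomial.nthRoots k (Yf i)).Nodup := Polynomial.nodup_roots hsep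
    rw [Multiset.toFinset_card_eq_card_iff_nodup.mpr hnd]
    have hprim := Complex.isPrimitiveRoot_exp k hk0
    rw [hprim.card_nthRoots]
    rw [if_pos (IsAlgClosed.exists_pow_nat_eq (Yf i) hk0')]
  have hprod : ∏ i, (t i).card = k ^ (n - 1) := by
    have hsub : ({m, j} : Finset (Fin (n + 1))) ⊆ Finset.univ := Finset.subset_univ _
    rw [← Finset.prod_sdiff hsub]
    have hpair : ∏ i ∈ ({m, j} : Finset (Fin (n + 1))), (t i).card = 1 := by
      rw [Finset.prod_pair hmj, htm, htj]
      norm_num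
    have hrest : ∏ i ∈ Finset.univ \ ({m, j} : Finset (Fin (n + 1))), (t i).card
        = k ^ (n - 1) := by
      have hconst : ∀ i ∈ Finset.univ \ ({m, j} : Finset (Fin (n + 1))),
          (t i).card = k := by
        intro i hi
        simp only [Finset.mem_sdiff, Finset.mem_insert, Finset.mem_singleton] at hi
        push_neg at hi
        exact htk i hi.2.1 hi.2.2
      rw [Finset.prod_congr rfl hconst, Finset.prod_const]
      congr 1
      rw [Finset.card_sdiff_of_subset hsub, Finset.card_univ, Fintype.card_fin, Finset.card_pair hmj]
      omega
    rw [hrest, hpair, mul_one]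
  constructor
  · rw [hSeq]
    exact ((Fintype.piFinset t).finite_toSet).image g
  · rw [hSeq, Set.ncard_image_of_injOn hinjg, hX_def, Set.ncard_coe_finset,
      Fintype.card_piFinset, hprod]
end
end

section
/- The set F of points of the generalized Fermat curve C^k(λ) ⊂ ℙ^n(ℂ) having at least one vanishing homogeneous coordinate (i.e., points represented by nonzero solutions x with x_j = 0 for some j ∈ {0,…,n}) is a finite set with exactly (n+1)·k^{n-1} elements. -/
noncomputable section

/-!
Put `y_i = x_i ^ k`. The system says `y_i = a_i y_0 + b_i y_1` for coefficient pairs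
`(a_i, b_i)` (`coeffA`, `coeffB`), and the hypotheses on `λ` make these pairs pairwise linearly
independent. Hence `y_m = 0` forces `y` to be a multiple of `d⁽ᵐ⁾_i = a_i b_m - b_i a_m`
(`kernelVec m`), which vanishes exactly at `i = m`. So the points with `x_m = 0` are the `[x]` with
`x ^ k ∈ ℂ ∙ d⁽ᵐ⁾`; after normalising one nonzero coordinate they correspond to a choice of `k`-th
roots of the `n - 1` other nonzero entries of `d⁽ᵐ⁾`, giving `k ^ (n - 1)` points for each `m`,
and the sets for different `m` are disjoint because `m` is the only vanishing coordinate.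
-/

open Finset Polynomial
open scoped LinearAlgebra.Projectivization

theorem IsPrimitiveRoot.card_nthRootsFinset_of_pow_eq {R : Type*} [CommRing R] [IsDomain R]
    {ζ : R} {k : ℕ} (hζ : IsPrimitiveRoot ζ k) {a α : R} (hα : α ^ k = a) (ha : a ≠ 0) :
    #(nthRootsFinset k a) = k := by
  classical
  rw [nthRootsFinset_def, Multiset.toFinset_card_of_nodup (hζ.nthRoots_nodup ha),
    hζ.card_nthRoots, if_pos ⟨α, hα⟩]

theorem Polynomial.nthRootsFinset_zero_right {R : Type*} [CommRing R] [IsDomain R] {k : ℕ}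
    (hk : k ≠ 0) : nthRootsFinset k (0 : R) = {0} := by
  ext x
  simp [mem_nthRootsFinset (Nat.pos_of_ne_zero hk), hk]

section PowerFiber

variable (K : Type*) {ι : Type*} [Field K]

def powerFiber (k : ℕ) (d : ι → K) : Set (ℙ K (ι → K)) :=
  {p | ∃ (x : ι → K) (hx : x ≠ 0), (∃ t : K, ∀ i, x i ^ k = t * d i) ∧
    p = Projectivization.mk K x hx}

variable {K}

theorem ne_zero_of_pow_eq_mul {k : ℕ} (hk : k ≠ 0) {x d : ι → K} {t : K} (hx : x ≠ 0)
    (hxt : ∀ i, x i ^ k = t * d i) : t ≠ 0 := by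
  rintro rfl
  exact hx (funext fun i => pow_eq_zero_iff hk |>.mp (by rw [hxt, zero_mul]))

theorem eq_zero_iff_of_pow_eq_mul {k : ℕ} (hk : k ≠ 0) {x d : ι → K} {t : K} (hx : x ≠ 0)
    (hxt : ∀ i, x i ^ k = t * d i) (i : ι) : x i = 0 ↔ d i = 0 := by
  rw [← pow_eq_zero_iff hk, hxt, mul_eq_zero, or_iff_right (ne_zero_of_pow_eq_mul hk hx hxt)]

theorem ncard_powerFiber_eq_ncard_setOf_pow_eq {k : ℕ} (hk : k ≠ 0) {d : ι → K} {i₀ : ι} {r : K}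
    (hr : r ^ k = d i₀) (hd : d i₀ ≠ 0) :
    (powerFiber K k d).ncard = {x : ι → K | x i₀ = r ∧ ∀ i, x i ^ k = d i}.ncard := by
  have hr0 : r ≠ 0 := by rintro rfl; exact hd (by rw [← hr, zero_pow hk])
  have ne_zero {x : ι → K} (hx : x i₀ = r) : x ≠ 0 := fun h => hr0 (by rw [← hx, h, Pi.zero_apply])
  symm
  refine Set.ncard_congr (fun x hx => Projectivization.mk K x (ne_zero hx.1)) ?_ ?_ ?_
  · rintro x ⟨-, hx⟩
    exact ⟨x, _, ⟨1, by simpa using hx⟩, rfl⟩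
  · intro x y hx hy hxy
    obtain ⟨a, rfl⟩ := (Projectivization.mk_eq_mk_iff K _ _ _ _).mp hxy
    have ha : (a : K) = 1 := by simpa [hr0, Units.smul_def, hy.1] using hx.1
    simp [Units.smul_def, ha]
  · rintro p ⟨x, hx, ⟨t, hxt⟩, rfl⟩
    have ht := ne_zero_of_pow_eq_mul hk hx hxt
    have hxi₀ : x i₀ ≠ 0 := (eq_zero_iff_of_pow_eq_mul hk hx hxt i₀).not.mpr hd
    have hscale : (r / x i₀) ^ k * t = 1 := by
      rw [div_pow, hr, hxt]; field_simp
    refine ⟨(r / x i₀) • x, ⟨by simp [hxi₀], fun i => ?_⟩, ?_⟩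
    · rw [Pi.smul_apply, smul_eq_mul, mul_pow, hxt, ← mul_assoc, hscale, one_mul]
    · exact (Projectivization.mk_eq_mk_iff' K _ _ _ _).mpr ⟨r / x i₀, rfl⟩

theorem disjoint_powerFiber {k : ℕ} (hk : k ≠ 0) {d d' : ι → K} {i : ι} (hi : d i = 0)
    (hi' : d' i ≠ 0) : Disjoint (powerFiber K k d) (powerFiber K k d') := by
  rw [Set.disjoint_left]
  rintro _ ⟨x, hx, ⟨t, ht⟩, rfl⟩ ⟨y, hy, ⟨t', ht'⟩, hxy⟩
  obtain ⟨a, rfl⟩ := (Projectivization.mk_eq_mk_iff K _ _ _ _).mp hxy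
  have hyi : (a • y) i = 0 := (eq_zero_iff_of_pow_eq_mul hk hx ht i).mpr hi
  exact hi' ((eq_zero_iff_of_pow_eq_mul hk hy ht' i).mp (by simpa [Units.smul_def] using hyi))

variable [Fintype ι] [DecidableEq ι] [DecidableEq K]

theorem ncard_setOf_pow_eq [IsAlgClosed K] {k : ℕ} {ζ : K} (hζ : IsPrimitiveRoot ζ k) (hk : k ≠ 0)
    {d : ι → K} {i₀ : ι} {r : K} (hr : r ^ k = d i₀) :
    {x : ι → K | x i₀ = r ∧ ∀ i, x i ^ k = d i}.ncard = k ^ #{i | i ≠ i₀ ∧ d i ≠ 0} := by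
  have hset : {x : ι → K | x i₀ = r ∧ ∀ i, x i ^ k = d i} =
      Fintype.piFinset fun i => if i = i₀ then {r} else nthRootsFinset k (d i) := by
    ext x
    simp only [Set.mem_ofPred_eq, mem_coe, Fintype.mem_piFinset]
    constructor
    · rintro ⟨rfl, hx⟩ i
      split_ifs with h
      · simp [h]
      · simp [mem_nthRootsFinset (Nat.pos_of_ne_zero hk), hx]
    · intro hx
      have hx₀ : x i₀ = r := by simpa using hx i₀
      refine ⟨hx₀, fun i => ?_⟩
      by_cases h : i = i₀
      · rw [h, hx₀, hr]
      · simpa [h, mem_nthRootsFinset (Nat.pos_of_ne_zero hk)] using hx i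
  have hcard (i : ι) : #(if i = i₀ then {r} else nthRootsFinset k (d i)) =
      if i ≠ i₀ ∧ d i ≠ 0 then k else 1 := by
    by_cases h : i = i₀
    · simp [h]
    by_cases hd : d i = 0
    · simp [h, hd, nthRootsFinset_zero_right hk]
    obtain ⟨α, hα⟩ := IsAlgClosed.exists_pow_nat_eq (d i) (Nat.pos_of_ne_zero hk)
    simp [h, hd, hζ.card_nthRootsFinset_of_pow_eq hα hd]
  rw [hset, Set.ncard_coe_finset, Fintype.card_piFinset]
  simp only [hcard]
  rw [prod_ite, prod_const, prod_const_one, mul_one]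

theorem ncard_powerFiber [IsAlgClosed K] {k : ℕ} {ζ : K} (hζ : IsPrimitiveRoot ζ k) (hk : k ≠ 0)
    {d : ι → K} (hd : d ≠ 0) : (powerFiber K k d).ncard = k ^ (#{i | d i ≠ 0} - 1) := by
  obtain ⟨i₀, hi₀⟩ : ∃ i, d i ≠ 0 := Function.ne_iff.mp hd
  obtain ⟨r, hr⟩ := IsAlgClosed.exists_pow_nat_eq (d i₀) (Nat.pos_of_ne_zero hk)
  have hcard : #{i | i ≠ i₀ ∧ d i ≠ 0} = #{i | d i ≠ 0} - 1 := by
    rw [← card_erase_of_mem (mem_filter.mpr ⟨mem_univ i₀, hi₀⟩)]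
    congr 1
    ext i
    simp
  rw [ncard_powerFiber_eq_ncard_setOf_pow_eq hk hr hi₀, ncard_setOf_pow_eq hζ hk hr, hcard]

end PowerFiber

theorem exists_eq_mul_of_forall_eq_mul_add_mul {ι K : Type*} [Field K] {a b y : ι → K} {u v : K}
    (h : ∀ i, y i = a i * u + b i * v) {m : ι} (hm : y m = 0) (hab : a m ≠ 0 ∨ b m ≠ 0) :
    ∃ t, ∀ i, y i = t * (a i * b m - b i * a m) := by
  rw [h] at hm
  rcases hab with ha | hb
  · refine ⟨-v / a m, fun i => ?_⟩
    rw [h]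
    field_simp
    linear_combination a i * hm
  · refine ⟨u / b m, fun i => ?_⟩
    rw [h]
    field_simp
    linear_combination b i * hm

namespace GeneralizedFermat

variable {n : ℕ} (lam : Fin (n - 2) → ℂ)

def coeffA : Fin (n + 1) → ℂ
  | ⟨0, _⟩ => 1
  | ⟨1, _⟩ => 0
  | ⟨2, _⟩ => -1
  | ⟨j + 3, h⟩ => -lam ⟨j, by omega⟩

def coeffB : Fin (n + 1) → ℂ
  | ⟨0, _⟩ => 0
  | ⟨1, _⟩ => 1
  | ⟨_ + 2, _⟩ => -1

def kernelVec (m i : Fin (n + 1)) : ℂ := coeffA lam i * coeffB m - coeffB i * coeffA lam m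

theorem gfSol_iff {k : ℕ} (hn : 3 ≤ n) (x : Fin (n + 1) → ℂ) :
    gfSol k n hn lam x ↔ ∀ i, x i ^ k =
      coeffA lam i * x ⟨0, by omega⟩ ^ k + coeffB i * x ⟨1, by omega⟩ ^ k := by
  constructor
  · rintro ⟨h₂, h⟩ ⟨_ | _ | _ | j, hj⟩
    · simp [coeffA, coeffB]
    · simp [coeffA, coeffB]
    · simp only [coeffA, coeffB]
      linear_combination h₂
    · simp only [coeffA, coeffB]
      linear_combination h ⟨j, by omega⟩
  · intro h
    refine ⟨?_, fun j => ?_⟩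
    · have h₂ := h ⟨2, by omega⟩
      simp only [coeffA, coeffB] at h₂
      linear_combination h₂
    · have hj := h ⟨j + 3, by omega⟩
      simp only [coeffA, coeffB] at hj
      linear_combination hj

theorem kernelVec_ne_zero (hl0 : ∀ j, lam j ≠ 0) (hl1 : ∀ j, lam j ≠ 1)
    (hinj : Function.Injective lam) {m i : Fin (n + 1)} (h : i ≠ m) : kernelVec lam m i ≠ 0 := by
  rcases i with ⟨_ | _ | _ | j, hj⟩ <;> rcases m with ⟨_ | _ | _ | j', hj'⟩ <;>
    simp_all [kernelVec, coeffA, coeffB, sub_eq_zero, hinj.eq_iff, eq_comm (a := (1 : ℂ))]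

theorem gfSol_and_eq_zero_iff {k : ℕ} (hk : k ≠ 0) (hn : 3 ≤ n) (x : Fin (n + 1) → ℂ)
    (m : Fin (n + 1)) : gfSol k n hn lam x ∧ x m = 0 ↔ ∃ t, ∀ i, x i ^ k = t * kernelVec lam m i := by
  rw [gfSol_iff]
  constructor
  · rintro ⟨h, hm⟩
    refine exists_eq_mul_of_forall_eq_mul_add_mul (y := fun i => x i ^ k) h
      (by rw [hm, zero_pow hk]) ?_
    rcases m with ⟨_ | _ | _ | j, hj⟩ <;> simp [coeffA, coeffB]
  · rintro ⟨t, ht⟩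
    refine ⟨fun i => ?_, pow_eq_zero_iff hk |>.mp ?_⟩
    · rw [ht, ht, ht]
      simp only [kernelVec, coeffA, coeffB]
      ring
    · rw [ht, kernelVec, mul_comm (coeffA lam m), sub_self, mul_zero]

theorem kernelVec_self (m : Fin (n + 1)) : kernelVec lam m m = 0 := by
  rw [kernelVec, mul_comm, sub_self]

theorem card_filter_kernelVec_ne_zero (hl0 : ∀ j, lam j ≠ 0) (hl1 : ∀ j, lam j ≠ 1)
    (hinj : Function.Injective lam) (m : Fin (n + 1)) : #{i | kernelVec lam m i ≠ 0} = n := by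
  have : ({i | kernelVec lam m i ≠ 0} : Finset (Fin (n + 1))) = univ.erase m := by
    ext i
    simp only [mem_filter, mem_univ, true_and, mem_erase, and_true]
    exact ⟨by rintro h rfl; exact h (kernelVec_self lam i), kernelVec_ne_zero lam hl0 hl1 hinj⟩
  rw [this, card_erase_of_mem (mem_univ m), card_univ, Fintype.card_fin, Nat.add_sub_cancel]

theorem pairwise_disjoint_powerFiber_kernelVec (hl0 : ∀ j, lam j ≠ 0) (hl1 : ∀ j, lam j ≠ 1)
    (hinj : Function.Injective lam) {k : ℕ} (hk : k ≠ 0) :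
    Pairwise fun m m' =>
      Disjoint (powerFiber ℂ k (kernelVec lam m)) (powerFiber ℂ k (kernelVec lam m')) :=
  fun m _ h => disjoint_powerFiber hk (kernelVec_self lam m) (kernelVec_ne_zero lam hl0 hl1 hinj h)

theorem setOf_gfSol_eq_iUnion_powerFiber {k : ℕ} (hk : k ≠ 0) (hn : 3 ≤ n) :
    {p : Projectivization ℂ (Fin (n + 1) → ℂ) |
        ∃ (x : Fin (n + 1) → ℂ) (hx : x ≠ 0),
          gfSol k n hn lam x ∧ (∃ j, x j = 0) ∧ p = Projectivization.mk ℂ x hx} =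
      ⋃ m, powerFiber ℂ k (kernelVec lam m) := by
  ext p
  simp only [Set.mem_iUnion, powerFiber, Set.mem_ofPred_eq]
  constructor
  · rintro ⟨x, hx, hsol, ⟨m, hm⟩, rfl⟩
    exact ⟨m, x, hx, (gfSol_and_eq_zero_iff lam hk hn x m).mp ⟨hsol, hm⟩, rfl⟩
  · rintro ⟨m, x, hx, ht, rfl⟩
    obtain ⟨hsol, hm⟩ := (gfSol_and_eq_zero_iff lam hk hn x m).mpr ht
    exact ⟨x, hx, hsol, ⟨m, hm⟩, rfl⟩

end GeneralizedFermat

open GeneralizedFermat in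
theorem generalized_fermat_fixed_point_count_total (k n : ℕ) (hk : 2 ≤ k) (hn : 3 ≤ n)
    (lam : Fin (n - 2) → ℂ) (hl0 : ∀ j, lam j ≠ 0) (hl1 : ∀ j, lam j ≠ 1)
    (hinj : Function.Injective lam) :
    {p : Projectivization ℂ (Fin (n + 1) → ℂ) |
        ∃ (x : Fin (n + 1) → ℂ) (hx : x ≠ 0),
          gfSol k n hn lam x ∧ (∃ j, x j = 0) ∧ p = Projectivization.mk ℂ x hx}.Finite ∧
      {p : Projectivization ℂ (Fin (n + 1) → ℂ) |
        ∃ (x : Fin (n + 1) → ℂ) (hx : x ≠ 0),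
          gfSol k n hn lam x ∧ (∃ j, x j = 0) ∧ p = Projectivization.mk ℂ x hx}.ncard =
        (n + 1) * k ^ (n - 1) := by
  have hk0 : k ≠ 0 := by omega
  have : Nontrivial (Fin (n + 1)) := Fin.nontrivial_iff_two_le.mpr (by omega)
  have hfiber (m : Fin (n + 1)) : (powerFiber ℂ k (kernelVec lam m)).ncard = k ^ (n - 1) := by
    obtain ⟨i, hi⟩ := exists_ne m
    rw [ncard_powerFiber (Complex.isPrimitiveRoot_exp k hk0) hk0
      (Function.ne_iff.mpr ⟨i, kernelVec_ne_zero lam hl0 hl1 hinj hi⟩),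
      card_filter_kernelVec_ne_zero lam hl0 hl1 hinj]
  have hcard : (⋃ m, powerFiber ℂ k (kernelVec lam m)).ncard = (n + 1) * k ^ (n - 1) := by
    rw [Set.ncard_iUnion_of_finite
      (fun m => Set.finite_of_ncard_pos (by rw [hfiber]; positivity))
      (pairwise_disjoint_powerFiber_kernelVec lam hl0 hl1 hinj hk0)]
    simp [hfiber, finsum_eq_sum_of_fintype]
  rw [setOf_gfSol_eq_iUnion_powerFiber lam hk0 hn]
  exact ⟨Set.finite_of_ncard_pos (by rw [hcard]; positivity), hcard⟩
end
end

section
/- Let x be a nonzero solution of the generalized Fermat system of type (k,n). Then there exist integers a_1, …, a_n, not all divisible by k, and a scalar c ∈ ℂ such that (x_0, ω^{a_1}·x_1, …, ω^{a_n}·x_n) = c·(x_0, x_1, …, x_n), if and only if some coordinate x_j of x (0 ≤ j ≤ n) vanishes. (That is, the set of points of the curve C^k(λ) fixed by some non-trivial element of the generalized Fermat group H ≅ (ℤ/kℤ)^n is exactly the set F of curve points with a vanishing coordinate.) -/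
noncomputable section

theorem generalized_fermat_fixed_points_of_group (k n : ℕ) (hk : 2 ≤ k) (hn : 3 ≤ n)
    (lam : Fin (n - 2) → ℂ) (hl0 : ∀ j, lam j ≠ 0) (hl1 : ∀ j, lam j ≠ 1)
    (hinj : Function.Injective lam)
    (x : Fin (n + 1) → ℂ) (hx0 : x ≠ 0) (hx : gfSol k n hn lam x) :
    (∃ (a : Fin n → ℤ) (c : ℂ), (∃ i, ¬ (k : ℤ) ∣ a i) ∧
        (fun j : Fin (n + 1) =>
          if h : (j : ℕ) = 0 then x j
          else
            Complex.exp (2 * (Real.pi : ℂ) * Complex.I / (k : ℂ)) ^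
                a ⟨(j : ℕ) - 1, by have := j.2; omega⟩ * x j) = c • x) ↔
      ∃ j, x j = 0 := by
  have hkpos : (k : ℕ) ≠ 0 := by omega
  have hprim : IsPrimitiveRoot (Complex.exp (2 * (Real.pi : ℂ) * Complex.I / (k : ℂ))) k :=
    Complex.isPrimitiveRoot_exp k hkpos
  set ω := Complex.exp (2 * (Real.pi : ℂ) * Complex.I / (k : ℂ)) with hω
  constructor
  · rintro ⟨a, c, ⟨i, hi⟩, heq⟩
    by_contra h
    push_neg at h
    have h0 := congrFun heq ⟨0, by omega⟩
    simp only [Pi.smul_apply, smul_eq_mul] at h0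
    rw [dif_pos trivial] at h0
    have hc : c = 1 :=
      mul_right_cancel₀ (h ⟨0, by omega⟩) (by rw [one_mul]; exact h0.symm)
    have hi1 := congrFun heq ⟨(i : ℕ) + 1, by omega⟩
    simp only [Pi.smul_apply, smul_eq_mul, hc, one_mul] at hi1
    rw [dif_neg (by simp)] at hi1
    have : (⟨(i : ℕ) + 1 - 1, by omega⟩ : Fin n) = i := by
      ext; simp
    rw [this] at hi1
    have hxne := h ⟨(i : ℕ) + 1, by omega⟩
    have hone : ω ^ a i = 1 :=
      mul_right_cancel₀ hxne (by rw [one_mul]; exact hi1)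
    exact hi ((hprim.zpow_eq_one_iff_dvd (a i)).1 hone)
  · rintro ⟨j, hj⟩
    have hknd1 : ¬ (k : ℤ) ∣ (1 : ℤ) := by
      intro hd
      have := Int.le_of_dvd one_pos hd
      omega
    by_cases hj0 : (j : ℕ) = 0
    · refine ⟨fun _ => 1, ω, ⟨⟨0, by omega⟩, hknd1⟩, ?_⟩
      funext m
      simp only [Pi.smul_apply, smul_eq_mul]
      by_cases hm0 : (m : ℕ) = 0
      · rw [dif_pos hm0]
        have : m = j := by ext; omega
        rw [this, hj, mul_zero]
      · rw [dif_neg hm0, zpow_one]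
    · refine ⟨fun i => if (i : ℕ) = (j : ℕ) - 1 then 1 else 0, 1,
        ⟨⟨(j : ℕ) - 1, by have := j.2; omega⟩, by simpa using hknd1⟩, ?_⟩
      funext m
      simp only [Pi.smul_apply, smul_eq_mul, one_mul]
      by_cases hm0 : (m : ℕ) = 0
      · rw [dif_pos hm0]
      · rw [dif_neg hm0]
        by_cases hmj : (m : ℕ) - 1 = (j : ℕ) - 1
        · have hmj' : m = j := by ext; omega
          rw [if_pos (by simpa using hmj), hmj', hj, mul_zero]
        · rw [if_neg (by simpa using hmj), zpow_zero, one_mul]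
end
end

section
/- Let k ≥ 2 and n ≥ 3 be integers with (k-1)(n-1) > 2. In ℚ, set g = (k^{n-1}·((n-1)(k-1) − 2) + 2)/2, and for each j ∈ {0, 1, …, k-1} set s_j = (1/2)·k^{n-2}·(n(k-1) − 2 − 2j) + δ_{j,k-1} (where δ_{j,k-1} = 1 if j = k-1 and 0 otherwise). Then each s_j is a positive integer; set t_j = s_j − 1 ≥ 0. Moreover, the following identity holds: Σ_{j=0}^{k-1} Σ_{i=0}^{t_j} (k·i + j + 1) − g(g+1)/2 = (1/24)·(k−1)·(k^{n-1} − 2)·(k^n + k^{n-1} − 12). -/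
private lemma sum_lin_q (K c : ℚ) (m : ℕ) :
    ∑ i ∈ Finset.range m, (K * (i : ℚ) + c) = K * (m : ℚ) * ((m : ℚ) - 1) / 2 + c * (m : ℚ) := by
  induction m with
  | zero => simp
  | succ m ih => rw [Finset.sum_range_succ, ih]; push_cast; ring

private lemma sum_id_q (m : ℕ) :
    ∑ i ∈ Finset.range m, (i : ℚ) = (m : ℚ) * ((m : ℚ) - 1) / 2 := by
  induction m with
  | zero => simp
  | succ m ih => rw [Finset.sum_range_succ, ih]; push_cast; ring

private lemma sum_sq_q (m : ℕ) :
    ∑ i ∈ Finset.range m, (i : ℚ) ^ 2 = (m : ℚ) * ((m : ℚ) - 1) * (2 * (m : ℚ) - 1) / 6 := by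
  induction m with
  | zero => simp
  | succ m ih => rw [Finset.sum_range_succ, ih]; push_cast; ring

theorem generalized_fermat_weight_lower_bound_identity (k n : ℕ) (hk : 2 ≤ k) (hn : 3 ≤ n)
    (hkn : 2 < (k - 1) * (n - 1))
    (g : ℚ) (hg : g = ((k : ℚ) ^ (n - 1) * (((n : ℚ) - 1) * ((k : ℚ) - 1) - 2) + 2) / 2)
    (s : Fin k → ℕ)
    (hs : ∀ j : Fin k, (s j : ℚ) =
      (1 / 2) * (k : ℚ) ^ (n - 2) * ((n : ℚ) * ((k : ℚ) - 1) - 2 - 2 * ((j : ℕ) : ℚ)) +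
        (if (j : ℕ) = k - 1 then 1 else 0)) :
    (∀ j, 0 < s j) ∧
      (∑ j : Fin k, ∑ i ∈ Finset.range (s j), ((k : ℚ) * i + ((j : ℕ) : ℚ) + 1)) -
          g * (g + 1) / 2 =
        (1 / 24) * ((k : ℚ) - 1) * ((k : ℚ) ^ (n - 1) - 2) *
          ((k : ℚ) ^ n + (k : ℚ) ^ (n - 1) - 12) := by
  have hK1 : (1 : ℚ) ≤ (k : ℚ) := by exact_mod_cast Nat.one_le_of_lt hk
  have hK2 : (2 : ℚ) ≤ (k : ℚ) := by exact_mod_cast hk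
  have hN3 : (3 : ℚ) ≤ (n : ℚ) := by exact_mod_cast hn
  have hP1 : (1 : ℚ) ≤ (k : ℚ) ^ (n - 2) := one_le_pow₀ hK1
  -- (n-2)*(k-1) ≥ 2 in ℚ
  have hprod : (2 : ℚ) ≤ ((n : ℚ) - 2) * ((k : ℚ) - 1) := by
    rcases eq_or_lt_of_le hk with hk2 | hk3
    · -- k = 2, then n >= 4
      have hn4 : 4 ≤ n := by
        subst hk2; simp at hkn; omega
      have : (4 : ℚ) ≤ (n : ℚ) := by exact_mod_cast hn4
      rw [← hk2]; push_cast; nlinarith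
    · have : (3 : ℚ) ≤ (k : ℚ) := by exact_mod_cast hk3
      nlinarith
  constructor
  · intro j
    have hj := hs j
    have hjlt : (j : ℕ) < k := j.isLt
    have hjQ : ((j : ℕ) : ℚ) ≤ (k : ℚ) - 1 := by
      have : (j : ℕ) ≤ k - 1 := by omega
      have := (Nat.cast_le (α := ℚ)).2 this
      rwa [Nat.cast_sub (by omega), Nat.cast_one] at this
    rw [← Nat.cast_pos (α := ℚ), hj]
    by_cases hcase : (j : ℕ) = k - 1
    · rw [if_pos hcase]
      have hJ : ((j : ℕ) : ℚ) = (k : ℚ) - 1 := by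
        rw [hcase, Nat.cast_sub (by omega), Nat.cast_one]
      rw [hJ]
      nlinarith [hP1, hprod, hN3, hK1]
    · rw [if_neg hcase]
      have hjle : (j : ℕ) ≤ k - 2 := by omega
      have hjQ2 : ((j : ℕ) : ℚ) ≤ (k : ℚ) - 2 := by
        have := (Nat.cast_le (α := ℚ)).2 hjle
        rwa [Nat.cast_sub hk, Nat.cast_two] at this
      nlinarith [hP1, hN3, hK2, hjQ2]
  · -- the identity
    set K : ℚ := (k : ℚ) with hKdef
    set N : ℚ := (n : ℚ) with hNdef
    set P : ℚ := (k : ℚ) ^ (n - 2) with hPdef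
    have hpow1 : (k : ℚ) ^ (n - 1) = P * K := by
      rw [hPdef, hKdef, ← pow_succ]; congr 1; omega
    have hpown : (k : ℚ) ^ n = P * K ^ 2 := by
      rw [hPdef, hKdef, ← pow_add]; congr 1; omega
    have inner : ∀ j : Fin k,
        ∑ i ∈ Finset.range (s j), (K * (i : ℚ) + ((j : ℕ) : ℚ) + 1) =
          K * (s j : ℚ) * ((s j : ℚ) - 1) / 2 + (((j : ℕ) : ℚ) + 1) * (s j : ℚ) := by
      intro j
      simpa [add_assoc] using sum_lin_q K (((j : ℕ) : ℚ) + 1) (s j)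
    rw [Finset.sum_congr rfl (fun j _ => inner j)]
    have hsub : ∀ j : Fin k,
        K * (s j : ℚ) * ((s j : ℚ) - 1) / 2 + (((j : ℕ) : ℚ) + 1) * (s j : ℚ) =
          (fun m : ℕ =>
            K * ((1 / 2) * P * (N * (K - 1) - 2 - 2 * (m : ℚ)) +
                  (if m = k - 1 then (1 : ℚ) else 0)) *
                (((1 / 2) * P * (N * (K - 1) - 2 - 2 * (m : ℚ)) +
                  (if m = k - 1 then (1 : ℚ) else 0)) - 1) / 2 +
              ((m : ℚ) + 1) *
                ((1 / 2) * P * (N * (K - 1) - 2 - 2 * (m : ℚ)) +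
                  (if m = k - 1 then (1 : ℚ) else 0))) (j : ℕ) := by
      intro j
      simp only [hs j]
    rw [Finset.sum_congr rfl (fun j _ => hsub j)]
    rw [Fin.sum_univ_eq_sum_range (fun m : ℕ =>
            K * ((1 / 2) * P * (N * (K - 1) - 2 - 2 * (m : ℚ)) +
                  (if m = k - 1 then (1 : ℚ) else 0)) *
                (((1 / 2) * P * (N * (K - 1) - 2 - 2 * (m : ℚ)) +
                  (if m = k - 1 then (1 : ℚ) else 0)) - 1) / 2 +
              ((m : ℚ) + 1) *
                ((1 / 2) * P * (N * (K - 1) - 2 - 2 * (m : ℚ)) +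
                  (if m = k - 1 then (1 : ℚ) else 0))) k]
    have hksplit : k = (k - 1) + 1 := by omega
    rw [show (Finset.range k) = Finset.range ((k - 1) + 1) from by rw [← hksplit],
      Finset.sum_range_succ]
    -- abbreviations
    set a : ℚ := (1 / 2) * P * (N * (K - 1) - 2) with hadef
    set A : ℚ := K * a * a / 2 - K * a / 2 + a with hAdef
    set B : ℚ := -(K * a * P) + K * P / 2 + a - P with hBdef
    set C : ℚ := K * P * P / 2 - P with hCdef
    have hmain : ∀ m ∈ Finset.range (k - 1),
        (K * ((1 / 2) * P * (N * (K - 1) - 2 - 2 * (m : ℚ)) +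
              (if m = k - 1 then (1 : ℚ) else 0)) *
            (((1 / 2) * P * (N * (K - 1) - 2 - 2 * (m : ℚ)) +
              (if m = k - 1 then (1 : ℚ) else 0)) - 1) / 2 +
          ((m : ℚ) + 1) *
            ((1 / 2) * P * (N * (K - 1) - 2 - 2 * (m : ℚ)) +
              (if m = k - 1 then (1 : ℚ) else 0))) =
          A + B * (m : ℚ) + C * (m : ℚ) ^ 2 := by
      intro m hm
      rw [Finset.mem_range] at hm
      rw [if_neg (by omega)]
      rw [hAdef, hBdef, hCdef, hadef]; ring
    rw [Finset.sum_congr rfl hmain]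
    rw [if_pos rfl]
    have hM : ((k - 1 : ℕ) : ℚ) = K - 1 := by
      rw [Nat.cast_sub (by omega), Nat.cast_one, hKdef]
    rw [Finset.sum_add_distrib, Finset.sum_add_distrib, Finset.sum_const, ← Finset.mul_sum,
      ← Finset.mul_sum, sum_id_q, sum_sq_q, hM, Finset.card_range, nsmul_eq_mul, hM, hg, hpow1, hpown]
    rw [hAdef, hBdef, hCdef, hadef]
    ring
end
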